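/- Let v, θ > 0 and let κ : ℝ → ℝ be continuous with κ(ζ) → ±κ∞ as ζ → ±∞, where κ∞ > 0. Define α(ζ) = e^{−(θ/v)∫₀^ζ κ(s) ds} · (1, −i)ᵀ ∈ ℂ². Then α is a solution of the Dirac equation −i v σ₃ α'(ζ) + θ κ(ζ) σ₁ α(ζ) = 0, and each component of α is square-integrable on ℝ. -/

import Mathlib

/-!
Writing `F ζ = ∫₀^ζ κ`, the function `A = exp (-(θ/v) F)` satisfies `v A' = -θ κ A`, which is exactly
the Dirac equation for `α = A · (1, -i)`. Since `κ ≥ κ∞/2` far to the right and `κ ≤ -κ∞/2` far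
to the left, `F ζ ≥ (κ∞/2)|ζ| - C`, so `A` is dominated by a multiple of `exp (-(θ κ∞ / 2v)|ζ|)`,
which is square-integrable.
-/

open MeasureTheory Complex Filter

theorem integrable_exp_neg_mul_abs {b : ℝ} (hb : 0 < b) :
    Integrable fun x : ℝ => Real.exp (-b * |x|) := by
  rw [← integrableOn_univ, ← Set.Iic_union_Ioi (a := 0), integrableOn_union]
  constructor
  · refine (integrableOn_exp_mul_Iic hb 0).congr_fun (fun x hx => ?_) measurableSet_Iic
    rw [abs_of_nonpos hx, mul_neg, neg_mul, neg_neg]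
  · refine (integrableOn_exp_mul_Ioi (neg_neg_of_pos hb) 0).congr_fun (fun x hx => ?_)
      measurableSet_Ioi
    rw [abs_of_pos hx]

theorem memLp_two_exp_neg_mul_abs {b : ℝ} (hb : 0 < b) :
    MemLp (fun x : ℝ => Real.exp (-b * |x|)) 2 volume := by
  refine (memLp_two_iff_integrable_sq_norm (by fun_prop)).2 <|
    (integrable_exp_neg_mul_abs (mul_pos two_pos hb)).congr (ae_of_all _ fun x => ?_)
  simp only [Real.norm_of_nonneg (Real.exp_pos _).le, sq, ← Real.exp_add]
  ring_nf

theorem memLp_two_exp_neg_mul_of_mul_abs_sub_le {a b C : ℝ} {G : ℝ → ℝ} (ha : 0 < a)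
    (hb : 0 < b) (hG : Measurable G) (hbound : ∀ x, b * |x| - C ≤ G x) :
    MemLp (fun x => Real.exp (-a * G x)) 2 volume := by
  refine (memLp_two_exp_neg_mul_abs (mul_pos ha hb)).of_le_mul (c := Real.exp (a * C))
    (by fun_prop) (ae_of_all _ fun x => ?_)
  simp only [Real.norm_of_nonneg (Real.exp_pos _).le, ← Real.exp_add, Real.exp_le_exp]
  nlinarith [hbound x]

theorem exists_mul_sub_le_integral {f : ℝ → ℝ} {c : ℝ} (hf : Continuous f)
    (htop : ∀ᶠ s in atTop, c ≤ f s) :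
    ∃ C, ∀ x, 0 ≤ x → c * x - C ≤ ∫ s in (0 : ℝ)..x, f s := by
  obtain ⟨R, hR⟩ := eventually_atTop.1 htop
  set R₀ := max R 0
  set g : ℝ → ℝ := fun x => (∫ s in (0 : ℝ)..x, f s) - c * x
  have hg : Continuous g :=
    (intervalIntegral.continuous_primitive (fun _ _ => hf.intervalIntegrable _ _) 0).sub
      (continuous_const_mul c)
  obtain ⟨m, hm⟩ := (isCompact_Icc (a := 0) (b := R₀)).bddBelow_image hg.continuousOn
  refine ⟨-m, fun x hx => ?_⟩
  rcases le_total x R₀ with hxR | hRx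
  · linarith [hm ⟨x, ⟨hx, hxR⟩, rfl⟩]
  · -- past `R₀` the integrand is at least `c`, so `g` can only grow
    have hgrowth : c * (x - R₀) ≤ ∫ s in R₀..x, f s := by
      have h := intervalIntegral.integral_mono_on (μ := volume) hRx intervalIntegrable_const
        (hf.intervalIntegrable _ _) fun s hs => hR s ((le_max_left R 0).trans hs.1)
      rwa [intervalIntegral.integral_const, smul_eq_mul, mul_comm] at h
    have hsplit := intervalIntegral.integral_add_adjacent_intervals (μ := volume)
      (hf.intervalIntegrable 0 R₀) (hf.intervalIntegrable R₀ x)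
    linarith [hm ⟨R₀, ⟨le_max_right R 0, le_rfl⟩, rfl⟩]

theorem exists_mul_abs_sub_le_integral {f : ℝ → ℝ} {c : ℝ} (hf : Continuous f)
    (htop : ∀ᶠ s in atTop, c ≤ f s) (hbot : ∀ᶠ s in atBot, f s ≤ -c) :
    ∃ C, ∀ x, c * |x| - C ≤ ∫ s in (0 : ℝ)..x, f s := by
  obtain ⟨C₁, h₁⟩ := exists_mul_sub_le_integral hf htop
  obtain ⟨C₂, h₂⟩ := exists_mul_sub_le_integral (f := fun s => -f (-s)) (by fun_prop)
    ((tendsto_neg_atTop_atBot.eventually hbot).mono fun s hs => le_neg_of_le_neg hs)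
  refine ⟨max C₁ C₂, fun x => ?_⟩
  rcases le_total 0 x with hx | hx
  · rw [abs_of_nonneg hx]
    linarith [h₁ x hx, le_max_left C₁ C₂]
  · have h := h₂ (-x) (neg_nonneg.2 hx)
    rw [intervalIntegral.integral_neg, intervalIntegral.integral_comp_neg, neg_neg, neg_zero,
      intervalIntegral.integral_symm, neg_neg] at h
    rw [abs_of_nonpos hx]
    linarith [le_max_right C₁ C₂]

theorem hasDerivAt_exp_mul_integral {κ : ℝ → ℝ} (hκ : Continuous κ) (a ζ : ℝ) :
    HasDerivAt (fun ζ => Real.exp (a * ∫ s in (0 : ℝ)..ζ, κ s))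
      (Real.exp (a * ∫ s in (0 : ℝ)..ζ, κ s) * (a * κ ζ)) ζ :=
  ((intervalIntegral.integral_hasDerivAt_right (hκ.intervalIntegrable 0 ζ)
    hκ.stronglyMeasurable.stronglyMeasurableAtFilter hκ.continuousAt).const_mul a).exp

theorem dirac_zero_mode
    (v θ : ℝ) (hv : 0 < v) (hθ : 0 < θ)
    (κ : ℝ → ℝ) (hκcont : Continuous κ)
    (κinf : ℝ) (hκinf : 0 < κinf)
    (hplus : Tendsto κ atTop (nhds κinf)) (hminus : Tendsto κ atBot (nhds (-κinf))) :
    let A : ℝ → ℝ := fun ζ => Real.exp (-(θ / v) * ∫ s in (0 : ℝ)..ζ, κ s)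
    let α₁ : ℝ → ℂ := fun ζ => (A ζ : ℂ)
    let α₂ : ℝ → ℂ := fun ζ => -Complex.I * (A ζ : ℂ)
    (∀ ζ : ℝ,
      -Complex.I * (v : ℂ) * deriv α₁ ζ + (θ : ℂ) * (κ ζ : ℂ) * α₂ ζ = 0 ∧
      Complex.I * (v : ℂ) * deriv α₂ ζ + (θ : ℂ) * (κ ζ : ℂ) * α₁ ζ = 0) ∧
    MemLp α₁ 2 volume ∧ MemLp α₂ 2 volume := by
  intro A α₁ α₂
  have hα₁ : ∀ ζ, HasDerivAt α₁ ((A ζ * (-(θ / v) * κ ζ) : ℝ) : ℂ) ζ := fun ζ =>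
    (hasDerivAt_exp_mul_integral hκcont _ ζ).ofReal_comp
  obtain ⟨C, hC⟩ := exists_mul_abs_sub_le_integral hκcont
    (hplus.eventually (eventually_ge_nhds (half_lt_self hκinf)))
    (hminus.eventually (eventually_le_nhds (by linarith)))
  have hA : MemLp A 2 volume := memLp_two_exp_neg_mul_of_mul_abs_sub_le (div_pos hθ hv)
    (half_pos hκinf) (intervalIntegral.continuous_primitive
      (fun _ _ => hκcont.intervalIntegrable _ _) 0).measurable hC
  have hv' : (v : ℂ) ≠ 0 := ofReal_ne_zero.2 hv.ne'
  refine ⟨fun ζ => ⟨?_, ?_⟩, hA.ofReal, hA.ofReal.const_mul _⟩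
  · rw [(hα₁ ζ).deriv]
    push_cast
    field_simp
    ring
  · rw [((hα₁ ζ).const_mul (-I)).deriv]
    push_cast
    field_simp
    linear_combination (θ * κ ζ * A ζ : ℂ) * I_sq
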